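/- There exist ν₋ < 0 < ν₊ such that for every ν ∈ [ν₋, 0] and every solution u of u' = G_ν(u) with u(0) ∈ S_{ν₊}, either u leaves S_{ν₊} at some finite forward time, or u(t) → (0, 0, 0) as t → ∞. -/

import Mathlib

/-!
Staying in the box forever forces the trajectory onto the centre manifold. The `y`-direction is
unstable, so a `y` that stays bounded is slaved to its forcing `coupling`, while `z` is stable
and forgets its initial value; both become `O(x⁴)`. With `y, z = O(x⁴)` and `ν ≤ 0` the term
`-x³` dominates the `x`-equation, so `|x|` eventually drops from `d` to `d²`, and then `y, z`
follow to `O(d⁸)`. Iterating along the scales `d, d², d⁴, …` drives the solution to `0`.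

Every step is a barrier argument on `[T, ∞)`: a level at which the derivative points inwards
cannot be crossed, and a level beyond which the derivative is bounded away from `0` in the
outward direction cannot be passed by a bounded function.
-/

open Set

/-- The vector field in `ℝ³`:
`G_ν(x,y,z) = (x(ν − x²) + x³(y+z) + x(y²+z²) + yz, y + x²(y+z) + x⁴ + yz, −z + x²(y+z) + x⁴ + yz)`. -/
noncomputable def G (ν : ℝ) (p : ℝ × ℝ × ℝ) : ℝ × ℝ × ℝ :=
  (p.1 * (ν - p.1 ^ 2) + p.1 ^ 3 * (p.2.1 + p.2.2) + p.1 * (p.2.1 ^ 2 + p.2.2 ^ 2)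
      + p.2.1 * p.2.2,
   p.2.1 + p.1 ^ 2 * (p.2.1 + p.2.2) + p.1 ^ 4 + p.2.1 * p.2.2,
   -p.2.2 + p.1 ^ 2 * (p.2.1 + p.2.2) + p.1 ^ 4 + p.2.1 * p.2.2)

/-- The box `S_θ = [−√(2θ), √(2θ)] × [−θ^{3/2}, θ^{3/2}] × [−θ^{3/2}, θ^{3/2}]`. -/
noncomputable def S (θ : ℝ) : Set (ℝ × ℝ × ℝ) :=
  Icc (-Real.sqrt (2 * θ)) (Real.sqrt (2 * θ)) ×ˢ
    (Icc (-θ ^ ((3 : ℝ) / 2)) (θ ^ ((3 : ℝ) / 2)) ×ˢ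
      Icc (-θ ^ ((3 : ℝ) / 2)) (θ ^ ((3 : ℝ) / 2)))

open Filter Topology

section Barrier

variable {f f' : ℝ → ℝ} {T b c : ℝ}

theorem add_mul_sub_le_of_le_imp_lt_deriv (hc : 0 ≤ c) (hf : ∀ t ≥ T, HasDerivAt f (f' t) t)
    (hb : ∀ t ≥ T, b ≤ f t → c < f' t) (hT : b ≤ f T) :
    ∀ t ≥ T, f T + c * (t - T) ≤ f t := by
  intro t ht
  refine image_le_of_deriv_right_lt_deriv_boundary' (f := fun s => f T + c * (s - T))
    (f' := fun _ => c) ?_ ?_ (by simp)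
    (fun s hs => (hf s hs.1).continuousAt.continuousWithinAt)
    (fun s hs => (hf s hs.1).hasDerivWithinAt) ?_ ⟨ht, le_rfl⟩
  · fun_prop
  · intro s _
    exact (((hasDerivAt_id s).sub_const T).const_mul c).const_add (f T)
      |>.hasDerivWithinAt.congr_deriv (mul_one c)
  · intro s hs hfs
    have : f T ≤ f T + c * (s - T) := le_add_of_nonneg_right (mul_nonneg hc (sub_nonneg.2 hs.1))
    exact hb s hs.1 (hT.trans (this.trans_eq hfs))

theorem le_of_eq_imp_deriv_neg (hf : ∀ t ≥ T, HasDerivAt f (f' t) t)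
    (hb : ∀ t ≥ T, f t = b → f' t < 0) (hT : f T ≤ b) : ∀ t ≥ T, f t ≤ b := by
  intro t ht
  exact image_le_of_deriv_right_lt_deriv_boundary' (B := fun _ => b) (B' := fun _ => 0)
    (fun s hs => (hf s hs.1).continuousAt.continuousWithinAt)
    (fun s hs => (hf s hs.1).hasDerivWithinAt) hT continuousOn_const
    (fun _ _ => hasDerivWithinAt_const _ _ _) (fun s hs => hb s hs.1) ⟨ht, le_rfl⟩

theorem exists_lt_of_le_imp_le_deriv (hc : 0 < c) (hf : ∀ t ≥ T, HasDerivAt f (f' t) t)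
    (hb : ∀ t ≥ T, b ≤ f t → c ≤ f' t) (hT : b ≤ f T) (M : ℝ) : ∃ t ≥ T, M < f t := by
  have hgrow := add_mul_sub_le_of_le_imp_lt_deriv (c := c / 2) (by positivity) hf
    (fun t ht h => (half_lt_self hc).trans_le (hb t ht h)) hT
  set s := (|M - f T| + 1) / (c / 2)
  have hs : 0 ≤ s := by positivity
  refine ⟨T + s, by linarith, ?_⟩
  have h := hgrow (T + s) (by linarith)
  rw [add_sub_cancel_left, mul_div_cancel₀ _ (by positivity)] at h
  linarith [le_abs_self (M - f T)]

theorem le_of_le_imp_le_deriv_of_le (hc : 0 < c) (hf : ∀ t ≥ T, HasDerivAt f (f' t) t)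
    (hb : ∀ t ≥ T, b ≤ f t → c ≤ f' t) {M : ℝ} (hM : ∀ t ≥ T, f t ≤ M) :
    ∀ t ≥ T, f t ≤ b := by
  intro t₀ ht₀
  by_contra! h
  obtain ⟨t, ht, hMt⟩ := exists_lt_of_le_imp_le_deriv hc (fun t ht => hf t (ht₀.trans ht))
    (fun t ht => hb t (ht₀.trans ht)) h.le M
  linarith [hM t (ht₀.trans ht)]

theorem exists_le_of_le_imp_deriv_le_neg (hc : 0 < c) (hf : ∀ t ≥ T, HasDerivAt f (f' t) t)
    (hb : ∀ t ≥ T, b ≤ f t → f' t ≤ -c) {M : ℝ} (hM : ∀ t ≥ T, M ≤ f t) :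
    ∃ T' ≥ T, ∀ t ≥ T', f t ≤ b := by
  obtain ⟨T', hT', hfT'⟩ : ∃ T' ≥ T, f T' ≤ b := by
    by_contra! h
    obtain ⟨t, ht, hMt⟩ := exists_lt_of_le_imp_le_deriv (f := fun t => -f t) (f' := fun t => -f' t)
      (b := -f T) hc (fun t ht => (hf t ht).neg)
      (fun t ht _ => le_neg.2 (hb t ht (h t ht).le)) le_rfl (-M)
    linarith [hM t ht]
  refine ⟨T', hT', le_of_eq_imp_deriv_neg (fun t ht => hf t (hT'.trans ht)) ?_ hfT'⟩
  intro t ht hft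
  linarith [hb t (hT'.trans ht) hft.ge]

end Barrier

section Perturbation

variable {f e : ℝ → ℝ} {T κ m : ℝ}

theorem le_of_hasDerivAt_self_add (hκ : κ ≤ 1 / 2) (hm : 0 < m)
    (hf : ∀ t ≥ T, HasDerivAt f (f t + e t) t) (he : ∀ t ≥ T, |e t| ≤ κ * |f t| + m)
    {M : ℝ} (hM : ∀ t ≥ T, f t ≤ M) : ∀ t ≥ T, f t ≤ 4 * m := by
  -- Above `4 m` the linear part beats the perturbation: `f' ≥ f / 2 - m ≥ m`.
  refine le_of_le_imp_le_deriv_of_le hm hf (fun t ht hft => ?_) hM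
  have hf0 : 0 ≤ f t := by linarith
  have he' := neg_abs_le (e t) |>.trans' (neg_le_neg (he t ht))
  rw [abs_of_nonneg hf0] at he'
  nlinarith [mul_nonneg (sub_nonneg.2 hκ) hf0]

theorem exists_le_of_hasDerivAt_neg_self_add (hκ : κ ≤ 1 / 2) (hm : 0 < m)
    (hf : ∀ t ≥ T, HasDerivAt f (-f t + e t) t) (he : ∀ t ≥ T, |e t| ≤ κ * |f t| + m)
    {M : ℝ} (hM : ∀ t ≥ T, M ≤ f t) : ∃ T' ≥ T, ∀ t ≥ T', f t ≤ 4 * m := by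
  refine exists_le_of_le_imp_deriv_le_neg hm hf (fun t ht hft => ?_) hM
  have hf0 : 0 ≤ f t := by linarith
  have he' := (le_abs_self (e t)).trans (he t ht)
  rw [abs_of_nonneg hf0] at he'
  nlinarith [mul_nonneg (sub_nonneg.2 hκ) hf0]

theorem abs_le_of_hasDerivAt_self_add (hκ : κ ≤ 1 / 2) (hm : 0 < m)
    (hf : ∀ t ≥ T, HasDerivAt f (f t + e t) t) (he : ∀ t ≥ T, |e t| ≤ κ * |f t| + m)
    {M : ℝ} (hM : ∀ t ≥ T, |f t| ≤ M) : ∀ t ≥ T, |f t| ≤ 4 * m := by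
  have hup := le_of_hasDerivAt_self_add hκ hm hf he fun t ht => (abs_le.1 (hM t ht)).2
  have hlow := le_of_hasDerivAt_self_add (f := fun t => -f t) (e := fun t => -e t) hκ hm
    (fun t ht => (hf t ht).neg.congr_deriv (neg_add _ _))
    (fun t ht => by simpa only [abs_neg] using he t ht)
    fun t ht => neg_le.1 (abs_le.1 (hM t ht)).1
  exact fun t ht => abs_le.2 ⟨neg_le.1 (hlow t ht), hup t ht⟩

theorem exists_abs_le_of_hasDerivAt_neg_self_add (hκ : κ ≤ 1 / 2) (hm : 0 < m)
    (hf : ∀ t ≥ T, HasDerivAt f (-f t + e t) t) (he : ∀ t ≥ T, |e t| ≤ κ * |f t| + m)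
    {M : ℝ} (hM : ∀ t ≥ T, |f t| ≤ M) : ∃ T' ≥ T, ∀ t ≥ T', |f t| ≤ 4 * m := by
  obtain ⟨T₁, hT₁, hup⟩ := exists_le_of_hasDerivAt_neg_self_add hκ hm hf he
    fun t ht => (abs_le.1 (hM t ht)).1
  obtain ⟨T₂, hT₂, hlow⟩ := exists_le_of_hasDerivAt_neg_self_add (f := fun t => -f t)
    (e := fun t => -e t) hκ hm (fun t ht => (hf t ht).neg.congr_deriv (neg_add _ _))
    (fun t ht => by simpa only [abs_neg] using he t ht)
    fun t ht => neg_le_neg (abs_le.1 (hM t ht)).2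
  refine ⟨max T₁ T₂, hT₁.trans (le_max_left _ _), fun t ht => abs_le.2 ⟨?_, ?_⟩⟩
  · exact neg_le.1 (hlow t ((le_max_right _ _).trans ht))
  · exact hup t ((le_max_left _ _).trans ht)

end Perturbation

theorem HasDerivAt.fst {𝕜 E F : Type*} [NontriviallyNormedField 𝕜] [NormedAddCommGroup E]
    [NormedSpace 𝕜 E] [NormedAddCommGroup F] [NormedSpace 𝕜 F] {u : 𝕜 → E × F} {u' : E × F}
    {t : 𝕜} (h : HasDerivAt u u' t) : HasDerivAt (fun s => (u s).1) u'.1 t :=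
  (ContinuousLinearMap.fst 𝕜 E F).hasFDerivAt.comp_hasDerivAt t h

theorem HasDerivAt.snd {𝕜 E F : Type*} [NontriviallyNormedField 𝕜] [NormedAddCommGroup E]
    [NormedSpace 𝕜 E] [NormedAddCommGroup F] [NormedSpace 𝕜 F] {u : 𝕜 → E × F} {u' : E × F}
    {t : 𝕜} (h : HasDerivAt u u' t) : HasDerivAt (fun s => (u s).2) u'.2 t :=
  (ContinuousLinearMap.snd 𝕜 E F).hasFDerivAt.comp_hasDerivAt t h

def coupling (p : ℝ × ℝ × ℝ) : ℝ :=
  p.1 ^ 2 * (p.2.1 + p.2.2) + p.1 ^ 4 + p.2.1 * p.2.2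

theorem G_snd_fst (ν : ℝ) (p : ℝ × ℝ × ℝ) : (G ν p).2.1 = p.2.1 + coupling p := by
  simp only [G, coupling]
  ring

theorem G_snd_snd (ν : ℝ) (p : ℝ × ℝ × ℝ) : (G ν p).2.2 = -p.2.2 + coupling p := by
  simp only [G, coupling]
  ring

theorem coupling_swap (x y z : ℝ) : coupling (x, z, y) = coupling (x, y, z) := by
  simp only [coupling]
  ring

theorem abs_coupling_le {p : ℝ × ℝ × ℝ} {a c : ℝ} (hx : |p.1| ≤ a) (hz : |p.2.2| ≤ c) :
    |coupling p| ≤ (a ^ 2 + c) * |p.2.1| + (a ^ 2 * c + a ^ 4) := by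
  obtain ⟨x, y, z⟩ := p
  have hx2 : x ^ 2 ≤ a ^ 2 := sq_le_sq' (abs_le.1 hx).1 (abs_le.1 hx).2
  have hx4 : x ^ 4 ≤ a ^ 4 := by
    simpa only [← pow_mul] using pow_le_pow_left₀ (sq_nonneg x) hx2 2
  calc |coupling (x, y, z)| ≤ x ^ 2 * (|y| + |z|) + x ^ 4 + |y| * |z| := by
        simp only [coupling]
        refine (abs_add_three _ _ _).trans ?_
        rw [abs_mul, abs_mul, abs_of_nonneg (sq_nonneg x),
          abs_of_nonneg (by positivity : (0 : ℝ) ≤ x ^ 4)]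
        gcongr
        exact abs_add_le y z
    _ ≤ a ^ 2 * (|y| + c) + a ^ 4 + |y| * c := by gcongr
    _ = (a ^ 2 + c) * |y| + (a ^ 2 * c + a ^ 4) := by ring

theorem abs_coupling_le' {p : ℝ × ℝ × ℝ} {a c : ℝ} (hx : |p.1| ≤ a) (hy : |p.2.1| ≤ c) :
    |coupling p| ≤ (a ^ 2 + c) * |p.2.2| + (a ^ 2 * c + a ^ 4) := by
  obtain ⟨x, y, z⟩ := p
  rw [← coupling_swap]
  exact abs_coupling_le (p := (x, z, y)) hx hy

theorem two_mul_G_fst_le {ν d : ℝ} {p : ℝ × ℝ × ℝ} (hν : ν ≤ 0) (hd0 : 0 < d)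
    (hd : d ≤ 1 / 1000) (hx : |p.1| ≤ d) (hy : |p.2.1| ≤ 9 * d ^ 4) (hz : |p.2.2| ≤ 9 * d ^ 4)
    (hdx : d ^ 4 ≤ p.1 ^ 2) : 2 * p.1 * (G ν p).1 ≤ -d ^ 8 := by
  obtain ⟨x, y, z⟩ := p
  dsimp only at hx hy hz hdx ⊢
  simp only [G]
  have hx4 : d ^ 8 ≤ x ^ 4 := by
    simpa only [← pow_mul] using pow_le_pow_left₀ (by positivity) hdx 2
  have hd4 : d ^ 4 ≤ d := pow_le_of_le_one hd0.le (by linarith) (by norm_num)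
  have hyz : y + z ≤ 18 * d ^ 4 := by linarith [le_abs_self y, le_abs_self z]
  have hy2 : y ^ 2 ≤ 81 * d ^ 8 := by nlinarith [sq_abs y, abs_nonneg y]
  have hz2 : z ^ 2 ≤ 81 * d ^ 8 := by nlinarith [sq_abs z, abs_nonneg z]
  have hxyz : x * (y * z) ≤ 81 * d * x ^ 4 := by
    have hyz' : |y| * |z| ≤ 81 * d ^ 8 := by nlinarith [abs_nonneg y, abs_nonneg z]
    have : |x| * (|y| * |z|) ≤ d * (81 * d ^ 8) := mul_le_mul hx hyz' (by positivity) hd0.le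
    nlinarith [le_abs_self (x * (y * z)), abs_mul x (y * z), abs_mul y z]
  have hsmall : 360 * d ^ 4 + 162 * d ≤ 1 := by linarith
  calc 2 * x * (x * (ν - x ^ 2) + x ^ 3 * (y + z) + x * (y ^ 2 + z ^ 2) + y * z)
      = 2 * ν * x ^ 2 - 2 * x ^ 4 + 2 * x ^ 4 * (y + z) + 2 * x ^ 2 * (y ^ 2 + z ^ 2)
          + 2 * (x * (y * z)) := by ring
    _ ≤ 0 - 2 * x ^ 4 + 36 * d ^ 4 * x ^ 4 + 324 * d ^ 4 * x ^ 4 + 162 * d * x ^ 4 := by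
        gcongr ?_ - _ + ?_ + ?_ + ?_
        · nlinarith [sq_nonneg x]
        · nlinarith [pow_nonneg (sq_nonneg x) 2]
        · nlinarith [mul_le_mul_of_nonneg_left hdx (by positivity : (0 : ℝ) ≤ d ^ 4 * x ^ 2),
            mul_le_mul_of_nonneg_left (add_le_add hy2 hz2) (sq_nonneg x)]
        · linarith
    _ ≤ -x ^ 4 := by nlinarith [pow_nonneg (sq_nonneg x) 2]
    _ ≤ -d ^ 8 := by linarith

/-- `y, z = O(x⁴)` is the scaling of the centre manifold of `G_ν` at the origin. -/
def InRegime (u : ℝ → ℝ × ℝ × ℝ) (d T : ℝ) : Prop :=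
  ∀ t ≥ T, |(u t).1| ≤ d ∧ |(u t).2.1| ≤ 9 * d ^ 4 ∧ |(u t).2.2| ≤ 9 * d ^ 4

section Solution

variable {u : ℝ → ℝ × ℝ × ℝ} {ν d T : ℝ}

theorem abs_snd_fst_le_of_G {κ m M : ℝ} (hκ : κ ≤ 1 / 2) (hm : 0 < m)
    (hu : ∀ t ≥ T, HasDerivAt u (G ν (u t)) t)
    (he : ∀ t ≥ T, |coupling (u t)| ≤ κ * |(u t).2.1| + m) (hM : ∀ t ≥ T, |(u t).2.1| ≤ M) :
    ∀ t ≥ T, |(u t).2.1| ≤ 4 * m :=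
  abs_le_of_hasDerivAt_self_add (f := fun s => (u s).2.1) (e := fun s => coupling (u s)) hκ hm
    (fun t ht => (hu t ht).snd.fst.congr_deriv (G_snd_fst ν (u t))) he hM

theorem exists_abs_snd_snd_le_of_G {κ m M : ℝ} (hκ : κ ≤ 1 / 2) (hm : 0 < m)
    (hu : ∀ t ≥ T, HasDerivAt u (G ν (u t)) t)
    (he : ∀ t ≥ T, |coupling (u t)| ≤ κ * |(u t).2.2| + m) (hM : ∀ t ≥ T, |(u t).2.2| ≤ M) :
    ∃ T' ≥ T, ∀ t ≥ T', |(u t).2.2| ≤ 4 * m :=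
  exists_abs_le_of_hasDerivAt_neg_self_add (f := fun s => (u s).2.2)
    (e := fun s => coupling (u s)) hκ hm
    (fun t ht => (hu t ht).snd.snd.congr_deriv (G_snd_snd ν (u t))) he hM

theorem exists_inRegime (hd0 : 0 < d) (hd : d ≤ 1 / 1000)
    (hu : ∀ t ≥ T, HasDerivAt u (G ν (u t)) t)
    (hbox : ∀ t ≥ T, |(u t).1| ≤ d ∧ |(u t).2.1| ≤ d ^ 3 ∧ |(u t).2.2| ≤ d ^ 3) :
    ∃ T' ≥ T, InRegime u d T' := by
  have hd2 : d ^ 2 ≤ d / 1000 := by nlinarith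
  have hd4 : 0 < d ^ 4 := by positivity
  have hy : ∀ t ≥ T, |(u t).2.1| ≤ 8 * d ^ 4 := fun t ht =>
    (abs_snd_fst_le_of_G (κ := d ^ 2 + d ^ 3) (m := 2 * d ^ 4) (by nlinarith) (by positivity) hu
      (fun t ht => (abs_coupling_le (hbox t ht).1 (hbox t ht).2.2).trans (by gcongr; nlinarith))
      (fun t ht => (hbox t ht).2.1) t ht).trans_eq (by ring)
  obtain ⟨T', hT', hz⟩ := exists_abs_snd_snd_le_of_G (κ := d ^ 2 + 8 * d ^ 4)
    (m := 9 / 4 * d ^ 4) (by nlinarith) (by positivity) hu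
    (fun t ht => (abs_coupling_le' (hbox t ht).1 (hy t ht)).trans (by gcongr; nlinarith))
    (fun t ht => (hbox t ht).2.2)
  refine ⟨T', hT', fun t ht => ⟨(hbox t (hT'.trans ht)).1, ?_, (hz t ht).trans_eq (by ring)⟩⟩
  exact (hy t (hT'.trans ht)).trans (by linarith)

theorem InRegime.exists_abs_fst_le (hν : ν ≤ 0) (hd0 : 0 < d) (hd : d ≤ 1 / 1000)
    (hu : ∀ t ≥ T, HasDerivAt u (G ν (u t)) t) (h : InRegime u d T) :
    ∃ T' ≥ T, ∀ t ≥ T', |(u t).1| ≤ d ^ 2 := by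
  obtain ⟨T', hT', hx⟩ := exists_le_of_le_imp_deriv_le_neg (f := fun s => (u s).1 ^ 2)
    (f' := fun s => 2 * (u s).1 * (G ν (u s)).1) (b := d ^ 4) (M := 0) (by positivity)
    (fun t ht => ((hu t ht).fst.pow 2).congr_deriv (by ring))
    (fun t ht hb => two_mul_G_fst_le hν hd0 hd (h t ht).1 (h t ht).2.1 (h t ht).2.2 hb)
    (fun t _ => sq_nonneg _)
  exact ⟨T', hT', fun t ht => abs_le_of_sq_le_sq ((hx t ht).trans_eq (by ring)) (by positivity)⟩

theorem InRegime.exists_sq (hν : ν ≤ 0) (hd0 : 0 < d) (hd : d ≤ 1 / 1000)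
    (hu : ∀ t ≥ T, HasDerivAt u (G ν (u t)) t) (h : InRegime u d T) :
    ∃ T' ≥ T, InRegime u (d ^ 2) T' := by
  have hd4 : d ^ 4 ≤ 1 / 1000 := (pow_le_of_le_one hd0.le (by linarith) (by norm_num)).trans hd
  have hd8 : 0 < d ^ 8 := by positivity
  obtain ⟨T₁, hT₁, hx⟩ := h.exists_abs_fst_le hν hd0 hd hu
  replace hu : ∀ t ≥ T₁, HasDerivAt u (G ν (u t)) t := fun t ht => hu t (hT₁.trans ht)
  replace h : InRegime u d T₁ := fun t ht => h t (hT₁.trans ht)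
  -- The first bound on `y` still carries `x² z ≈ 9 d⁸`; the improved `z` removes it below.
  have hy₁ : ∀ t ≥ T₁, |(u t).2.1| ≤ 40 * d ^ 8 := fun t ht =>
    (abs_snd_fst_le_of_G (κ := (d ^ 2) ^ 2 + 9 * d ^ 4) (m := 10 * d ^ 8) (by nlinarith)
      (by positivity) hu (fun t ht => (abs_coupling_le (hx t ht) (h t ht).2.2).trans_eq (by ring))
      (fun t ht => (h t ht).2.1) t ht).trans_eq (by ring)
  obtain ⟨T₂, hT₂, hz⟩ := exists_abs_snd_snd_le_of_G (κ := (d ^ 2) ^ 2 + 40 * d ^ 8)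
    (m := 5 / 4 * d ^ 8) (by nlinarith) (by positivity) hu
    (fun t ht => (abs_coupling_le' (hx t ht) (hy₁ t ht)).trans (by gcongr; nlinarith))
    (fun t ht => (h t ht).2.2)
  have hz₂ : ∀ t ≥ T₂, |(u t).2.2| ≤ 5 * d ^ 8 := fun t ht => (hz t ht).trans_eq (by ring)
  have hy₂ : ∀ t ≥ T₂, |(u t).2.1| ≤ 5 * d ^ 8 := fun t ht =>
    (abs_snd_fst_le_of_G (κ := (d ^ 2) ^ 2 + 5 * d ^ 8) (m := 5 / 4 * d ^ 8) (by nlinarith)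
      (by positivity) (fun t ht => hu t (hT₂.trans ht))
      (fun t ht => (abs_coupling_le (hx t (hT₂.trans ht)) (hz₂ t ht)).trans (by gcongr; nlinarith))
      (fun t ht => (h t (hT₂.trans ht)).2.1) t ht).trans_eq (by ring)
  refine ⟨T₂, hT₁.trans hT₂, fun t ht => ⟨hx t (hT₂.trans ht), ?_, ?_⟩⟩
  · exact (hy₂ t ht).trans (by nlinarith)
  · exact (hz₂ t ht).trans (by nlinarith)

theorem InRegime.exists_pow_two_pow (hν : ν ≤ 0) (hd0 : 0 < d) (hd : d ≤ 1 / 1000)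
    (hu : ∀ t ≥ T, HasDerivAt u (G ν (u t)) t) (h : InRegime u d T) (n : ℕ) :
    ∃ T' ≥ T, InRegime u (d ^ 2 ^ n) T' := by
  induction n with
  | zero => exact ⟨T, le_rfl, by simpa using h⟩
  | succ n ih =>
    obtain ⟨T', hT', h'⟩ := ih
    obtain ⟨T'', hT'', h''⟩ := h'.exists_sq hν (by positivity)
      ((pow_le_of_le_one hd0.le (by linarith) (by positivity)).trans hd)
      (fun t ht => hu t (hT'.trans ht))
    exact ⟨T'', hT'.trans hT'', by rwa [pow_succ, pow_mul]⟩

theorem tendsto_of_inRegime_pow_two_pow (hd0 : 0 < d) (hd1 : d < 1)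
    (h : ∀ n : ℕ, ∃ T, InRegime u (d ^ 2 ^ n) T) : Tendsto u atTop (𝓝 (0, 0, 0)) := by
  have hr : Tendsto (fun n : ℕ => d ^ 2 ^ n) atTop (𝓝 0) :=
    (tendsto_pow_atTop_nhds_zero_of_lt_one hd0.le hd1).comp
      (tendsto_pow_atTop_atTop_of_one_lt one_lt_two)
  have hr4 : Tendsto (fun n : ℕ => 9 * (d ^ 2 ^ n) ^ 4) atTop (𝓝 0) := by
    simpa using (hr.pow 4).const_mul 9
  rw [Metric.tendsto_nhds]
  intro ε hε
  obtain ⟨n, hn, hn4⟩ := ((hr.eventually (gt_mem_nhds hε)).and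
    (hr4.eventually (gt_mem_nhds hε))).exists
  obtain ⟨T, hT⟩ := h n
  filter_upwards [eventually_ge_atTop T] with t ht
  obtain ⟨hx, hy, hz⟩ := hT t ht
  simpa [Prod.dist_eq, Real.dist_eq] using
    ⟨hx.trans_lt hn, hy.trans_lt hn4, hz.trans_lt hn4⟩

end Solution

theorem abs_le_of_mem_S {θ : ℝ} {p : ℝ × ℝ × ℝ} (hθ : 0 ≤ θ) (hp : p ∈ S θ) :
    |p.1| ≤ √(2 * θ) ∧ |p.2.1| ≤ √(2 * θ) ^ 3 ∧ |p.2.2| ≤ √(2 * θ) ^ 3 := by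
  have h32 : θ ^ ((3 : ℝ) / 2) ≤ √(2 * θ) ^ 3 := by
    rw [Real.rpow_div_two_eq_sqrt _ hθ, show (3 : ℝ) = (3 : ℕ) by norm_num, Real.rpow_natCast]
    gcongr
    linarith
  obtain ⟨⟨hx, hx'⟩, ⟨hy, hy'⟩, hz, hz'⟩ := hp
  exact ⟨abs_le.2 ⟨hx, hx'⟩, abs_le.2 ⟨by linarith, by linarith⟩,
    abs_le.2 ⟨by linarith, by linarith⟩⟩

/-- There exist `ν₋ < 0 < ν₊` such that for every `ν ∈ [ν₋, 0]` and every forward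
solution `u` of `u' = G_ν(u)` with `u 0 ∈ S_{ν₊}`, either `u` leaves `S_{ν₊}` at some
finite forward time, or `u t → (0,0,0)` as `t → ∞`. -/
theorem stmt12 :
    ∃ νm νp : ℝ, νm < 0 ∧ 0 < νp ∧ ∀ ν ∈ Icc νm (0 : ℝ), ∀ u : ℝ → ℝ × ℝ × ℝ,
      (∀ t ∈ Ici (0 : ℝ), HasDerivAt u (G ν (u t)) t) →
      u 0 ∈ S νp →
      (∃ t ≥ (0 : ℝ), u t ∉ S νp) ∨
        Filter.Tendsto u Filter.atTop (nhds ((0 : ℝ), (0 : ℝ), (0 : ℝ))) := by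
  refine ⟨-1, 1 / 2000000, by norm_num, by norm_num, fun ν hν u hu _ => ?_⟩
  refine or_iff_not_imp_left.2 fun hleave => ?_
  push Not at hleave
  have hd : √(2 * (1 / 2000000)) = 1 / 1000 := by
    rw [Real.sqrt_eq_iff_mul_self_eq] <;> norm_num
  obtain ⟨T, hT, hreg⟩ := exists_inRegime (T := 0) (d := 1 / 1000) (by norm_num) le_rfl
    hu fun t ht => hd ▸ abs_le_of_mem_S (by norm_num) (hleave t ht)
  exact tendsto_of_inRegime_pow_two_pow (by norm_num) (by norm_num) fun n =>
    (hreg.exists_pow_two_pow hν.2 (by norm_num) le_rfl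
      (fun t ht => hu t (hT.trans ht)) n).imp fun _ h => h.2
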